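/- Let K be a field and let V, W be n-dimensional vector spaces over K. Let S, T : V → W be linear maps such that rank(S) = rank(T) = rank(S − T) = r and ker(S) ∩ ker(T) = 0. Then dim_K( S(V) + T(V) ) ≤ 3r − n; that is, the images of S and T are contained in a common (3r−n)-dimensional subspace of W. -/
import Mathlib


/-- Lemma 4.10: let `S, T : V → W` be linear maps between `n`-dimensional vector
spaces over a field `K` with `rank S = rank T = rank (S - T) = r` and
`ker S ∩ ker T = 0`. Then the images of `S` and `T` span a subspace of dimension at
most `3r - n`; in particular they are contained in a common `(3r-n)`-dimensional
subspace of `W`. -/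
theorem stmt_14 {K V W : Type*} [Field K]
    [AddCommGroup V] [Module K V] [AddCommGroup W] [Module K W]
    [FiniteDimensional K V] [FiniteDimensional K W]
    {n r : ℕ} (hV : Module.finrank K V = n) (hW : Module.finrank K W = n)
    (S T : V →ₗ[K] W)
    (hS : Module.finrank K ↥(LinearMap.range S) = r)
    (hT : Module.finrank K ↥(LinearMap.range T) = r)
    (hST : Module.finrank K ↥(LinearMap.range (S - T)) = r)
    (hker : LinearMap.ker S ⊓ LinearMap.ker T = ⊥) :
    Module.finrank K ↥(LinearMap.range S ⊔ LinearMap.range T) ≤ 3 * r - n := by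
  have h1 := Submodule.finrank_sup_add_finrank_inf_eq (LinearMap.range S) (LinearMap.range T)
  rw [hS, hT] at h1
  have h2 := LinearMap.finrank_range_add_finrank_ker (S - T)
  rw [hST, hV] at h2
  have hmap : ∀ x ∈ LinearMap.ker (S - T), S x ∈ LinearMap.range S ⊓ LinearMap.range T := by
    intro x hx
    have hx' : S x = T x := by
      have h := LinearMap.mem_ker.mp hx
      simp only [LinearMap.sub_apply] at h
      exact sub_eq_zero.mp h
    exact ⟨⟨x, rfl⟩, ⟨x, hx'.symm⟩⟩
  set f := S.restrict hmap with hf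
  have hinj : Function.Injective f := by
    rw [← LinearMap.ker_eq_bot]
    rw [eq_bot_iff]
    rintro ⟨x, hx⟩ hxk
    have hSx : S x = 0 := by
      have := congrArg (Subtype.val) (LinearMap.mem_ker.mp hxk)
      simpa [hf, LinearMap.restrict_apply] using this
    have hTx : T x = 0 := by
      have h := LinearMap.mem_ker.mp hx
      simp only [LinearMap.sub_apply, sub_eq_zero] at h
      rw [← h, hSx]
    have : x ∈ LinearMap.ker S ⊓ LinearMap.ker T := ⟨hSx, hTx⟩
    rw [hker] at this
    simpa using this
  have h3 : Module.finrank K ↥(LinearMap.ker (S - T)) ≤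
      Module.finrank K ↥(LinearMap.range S ⊓ LinearMap.range T) :=
    LinearMap.finrank_le_finrank_of_injective hinj
  omega
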